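/- arXiv:1010.5968 — 4 statements merged into one kernel-verified Lean document; each statement's English description precedes it below -/
import Mathlib

section
/- Let Ω = [0,1]×[0,1], ε ∈ ℝ, let b = (b₁,b₂) : Ω → ℝ² be continuously differentiable, f : Ω → ℝ continuous, and φ : Ω → ℝ twice continuously differentiable, with −(b·∇)(∇·(bφ)) + ε·φ = f on Ω and (b·ν)∇·(bφ) = 0 on ∂Ω (i.e. b₁·∇·(bφ) = 0 on the faces x = 0, 1 and b₂·∇·(bφ) = 0 on the faces y = 0, 1). Then for every continuously differentiable r : Ω → ℝ satisfying ∇·(br) = 0 on Ω, one has ∫_Ω (ε·φ − f) r dx dy = 0. -/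
/-!
With `w = ∇·(bφ)`, the equation says `(εφ - f) r = (b·∇w) r`, and since `∇·(br) = 0` this is
`∇·(b w r) = ∂ₓ(b₁ w r) + ∂ᵧ(b₂ w r)`. The boundary condition makes the normal flux `(b·ν) w r`
vanish on `∂Ω`, so the integral is zero by the fundamental theorem of calculus in each variable,
applied after interchanging the order of integration for the `x`-derivative.
-/

open Set MeasureTheory Function

section Rectangle

variable {a b c d : ℝ}

theorem integral_eq_sub_of_hasDerivWithinAt_Icc {g g' : ℝ → ℝ} (hab : a ≤ b)
    (hg : ∀ t ∈ Icc a b, HasDerivWithinAt g (g' t) (Icc a b) t)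
    (hg' : ContinuousOn g' (Icc a b)) :
    ∫ t in a..b, g' t = g b - g a := by
  refine intervalIntegral.integral_eq_sub_of_hasDeriv_right_of_le hab
    (fun t ht => (hg t ht).continuousWithinAt) (fun t ht => ?_) ?_
  · exact ((hg t (Ioo_subset_Icc_self ht)).hasDerivAt (Icc_mem_nhds ht.1 ht.2)).hasDerivWithinAt
  · exact (hg'.mono (uIcc_of_le hab).subset).intervalIntegrable

theorem integral_integral_divergence_Icc_eq_zero {G H Gx Hy : ℝ → ℝ → ℝ}
    (hab : a ≤ b) (hcd : c ≤ d)
    (hG : ∀ x ∈ Icc a b, ∀ y ∈ Icc c d, HasDerivWithinAt (G · y) (Gx x y) (Icc a b) x)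
    (hH : ∀ x ∈ Icc a b, ∀ y ∈ Icc c d, HasDerivWithinAt (H x ·) (Hy x y) (Icc c d) y)
    (hGx : ContinuousOn (uncurry Gx) (Icc a b ×ˢ Icc c d))
    (hHy : ContinuousOn (uncurry Hy) (Icc a b ×ˢ Icc c d))
    (hG_left : ∀ y ∈ Icc c d, G a y = 0) (hG_right : ∀ y ∈ Icc c d, G b y = 0)
    (hH_bot : ∀ x ∈ Icc a b, H x c = 0) (hH_top : ∀ x ∈ Icc a b, H x d = 0) :
    ∫ x in a..b, ∫ y in c..d, (Gx x y + Hy x y) = 0 := by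
  have hHy_slice : ∀ x ∈ Icc a b, ∫ y in c..d, Hy x y = 0 := fun x hx => by
    rw [integral_eq_sub_of_hasDerivWithinAt_Icc hcd (hH x hx) (hHy.uncurry_left x hx),
      hH_top x hx, hH_bot x hx, sub_self]
  have hGx_slice : ∀ y ∈ Icc c d, ∫ x in a..b, Gx x y = 0 := fun y hy => by
    rw [integral_eq_sub_of_hasDerivWithinAt_Icc hab (hG · · y hy) (hGx.uncurry_right y hy),
      hG_right y hy, hG_left y hy, sub_self]
  have hGx_int : IntegrableOn (uncurry Gx) (uIoc a b ×ˢ uIoc c d) := by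
    rw [uIoc_of_le hab, uIoc_of_le hcd]
    exact (hGx.integrableOn_compact (isCompact_Icc.prod isCompact_Icc)).mono_set
      (prod_mono Ioc_subset_Icc_self Ioc_subset_Icc_self)
  calc ∫ x in a..b, ∫ y in c..d, (Gx x y + Hy x y)
      = ∫ x in a..b, ∫ y in c..d, Gx x y := by
        refine intervalIntegral.integral_congr fun x hx => ?_
        rw [uIcc_of_le hab] at hx
        rw [intervalIntegral.integral_add
          ((hGx.uncurry_left x hx).mono (uIcc_of_le hcd).subset).intervalIntegrable
          ((hHy.uncurry_left x hx).mono (uIcc_of_le hcd).subset).intervalIntegrable,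
          hHy_slice x hx, add_zero]
    _ = ∫ y in c..d, ∫ x in a..b, Gx x y := intervalIntegral_intervalIntegral_swap hGx_int
    _ = 0 := by
        rw [← intervalIntegral.integral_zero]
        refine intervalIntegral.integral_congr fun y hy => ?_
        exact hGx_slice y (by rwa [uIcc_of_le hcd] at hy)

theorem integral_integral_transport_mul_eq_zero
    {b1 b2 b1x b2y w wX wY r rX rY : ℝ → ℝ → ℝ} (hab : a ≤ b) (hcd : c ≤ d)
    (hb1x : ∀ x ∈ Icc a b, ∀ y ∈ Icc c d, HasDerivWithinAt (b1 · y) (b1x x y) (Icc a b) x)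
    (hb2y : ∀ x ∈ Icc a b, ∀ y ∈ Icc c d, HasDerivWithinAt (b2 x ·) (b2y x y) (Icc c d) y)
    (hwX : ∀ x ∈ Icc a b, ∀ y ∈ Icc c d, HasDerivWithinAt (w · y) (wX x y) (Icc a b) x)
    (hwY : ∀ x ∈ Icc a b, ∀ y ∈ Icc c d, HasDerivWithinAt (w x ·) (wY x y) (Icc c d) y)
    (hrX : ∀ x ∈ Icc a b, ∀ y ∈ Icc c d, HasDerivWithinAt (r · y) (rX x y) (Icc a b) x)
    (hrY : ∀ x ∈ Icc a b, ∀ y ∈ Icc c d, HasDerivWithinAt (r x ·) (rY x y) (Icc c d) y)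
    (hcont : ∀ F ∈ ({b1, b2, b1x, b2y, w, wX, wY} : Set (ℝ → ℝ → ℝ)),
      ContinuousOn (uncurry F) (Icc a b ×ˢ Icc c d))
    (hrc : ∀ F ∈ ({r, rX, rY} : Set (ℝ → ℝ → ℝ)), ContinuousOn (uncurry F) (Icc a b ×ˢ Icc c d))
    (hdiv : ∀ x ∈ Icc a b, ∀ y ∈ Icc c d,
      b1x x y * r x y + b1 x y * rX x y + b2y x y * r x y + b2 x y * rY x y = 0)
    (hbdx : ∀ y ∈ Icc c d, b1 a y * w a y = 0 ∧ b1 b y * w b y = 0)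
    (hbdy : ∀ x ∈ Icc a b, b2 x c * w x c = 0 ∧ b2 x d * w x d = 0) :
    ∫ x in a..b, ∫ y in c..d, (b1 x y * wX x y + b2 x y * wY x y) * r x y = 0 := by
  have hG : ∀ x ∈ Icc a b, ∀ y ∈ Icc c d,
      HasDerivWithinAt (fun t => b1 t y * w t y * r t y)
        (b1x x y * w x y * r x y + b1 x y * wX x y * r x y + b1 x y * w x y * rX x y)
        (Icc a b) x := fun x hx y hy =>
    (((hb1x x hx y hy).mul (hwX x hx y hy)).mul (hrX x hx y hy)).congr_deriv
      (by simp only [Pi.mul_apply]; ring)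
  have hH : ∀ x ∈ Icc a b, ∀ y ∈ Icc c d,
      HasDerivWithinAt (fun t => b2 x t * w x t * r x t)
        (b2y x y * w x y * r x y + b2 x y * wY x y * r x y + b2 x y * w x y * rY x y)
        (Icc c d) y := fun x hx y hy =>
    (((hb2y x hx y hy).mul (hwY x hx y hy)).mul (hrY x hx y hy)).congr_deriv
      (by simp only [Pi.mul_apply]; ring)
  -- `(b·∇w) r = ∇·(b w r) - w ∇·(b r)`
  have hdivergence : ∀ x ∈ Icc a b, ∀ y ∈ Icc c d,
      (b1 x y * wX x y + b2 x y * wY x y) * r x y =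
        (b1x x y * w x y * r x y + b1 x y * wX x y * r x y + b1 x y * w x y * rX x y) +
        (b2y x y * w x y * r x y + b2 x y * wY x y * r x y + b2 x y * w x y * rY x y) :=
    fun x hx y hy => by linear_combination w x y * -hdiv x hx y hy
  rw [intervalIntegral.integral_congr fun x hx => intervalIntegral.integral_congr fun y hy =>
    hdivergence x (uIcc_of_le hab ▸ hx) y (uIcc_of_le hcd ▸ hy)]
  refine integral_integral_divergence_Icc_eq_zero hab hcd hG hH ?_ ?_
    (fun y hy => by simp [(hbdx y hy).1]) (fun y hy => by simp [(hbdx y hy).2])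
    (fun x hx => by simp [(hbdy x hx).1]) (fun x hx => by simp [(hbdy x hx).2])
  · exact ((((hcont b1x (by simp)).mul (hcont w (by simp))).mul (hrc r (by simp))).add
      (((hcont b1 (by simp)).mul (hcont wX (by simp))).mul (hrc r (by simp)))).add
      (((hcont b1 (by simp)).mul (hcont w (by simp))).mul (hrc rX (by simp)))
  · exact ((((hcont b2y (by simp)).mul (hcont w (by simp))).mul (hrc r (by simp))).add
      (((hcont b2 (by simp)).mul (hcont wY (by simp))).mul (hrc r (by simp)))).add
      (((hcont b2 (by simp)).mul (hcont w (by simp))).mul (hrc rY (by simp)))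

end Rectangle

theorem statement11_general (ε : ℝ)
    (b1 b2 b1x b1y b2x b2y f phi phiX phiY w wX wY : ℝ → ℝ → ℝ)
    (hb1x : ∀ x ∈ Icc (0:ℝ) 1, ∀ y ∈ Icc (0:ℝ) 1,
      HasDerivWithinAt (fun t => b1 t y) (b1x x y) (Icc (0:ℝ) 1) x)
    (hb2y : ∀ x ∈ Icc (0:ℝ) 1, ∀ y ∈ Icc (0:ℝ) 1,
      HasDerivWithinAt (fun t => b2 x t) (b2y x y) (Icc (0:ℝ) 1) y)
    (hwX : ∀ x ∈ Icc (0:ℝ) 1, ∀ y ∈ Icc (0:ℝ) 1,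
      HasDerivWithinAt (fun t => w t y) (wX x y) (Icc (0:ℝ) 1) x)
    (hwY : ∀ x ∈ Icc (0:ℝ) 1, ∀ y ∈ Icc (0:ℝ) 1,
      HasDerivWithinAt (fun t => w x t) (wY x y) (Icc (0:ℝ) 1) y)
    (hcont : ∀ F ∈ ({b1, b2, b1x, b1y, b2x, b2y, f, phi, phiX, phiY, w, wX, wY} :
        Set (ℝ → ℝ → ℝ)),
      ContinuousOn (fun pt : ℝ × ℝ => F pt.1 pt.2) (Icc (0:ℝ) 1 ×ˢ Icc (0:ℝ) 1))
    -- (a) the PDE : -(b·∇)(∇·(bφ)) + εφ = f on Ω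
    (hpde : ∀ x ∈ Icc (0:ℝ) 1, ∀ y ∈ Icc (0:ℝ) 1,
      -(b1 x y * wX x y + b2 x y * wY x y) + ε * phi x y = f x y)
    -- (b) the boundary condition (b·ν)∇·(bφ) = 0 on ∂Ω
    (hbdx : ∀ y ∈ Icc (0:ℝ) 1, b1 0 y * w 0 y = 0 ∧ b1 1 y * w 1 y = 0)
    (hbdy : ∀ x ∈ Icc (0:ℝ) 1, b2 x 0 * w x 0 = 0 ∧ b2 x 1 * w x 1 = 0) :
    ∀ r rX rY : ℝ → ℝ → ℝ,
      (∀ x ∈ Icc (0:ℝ) 1, ∀ y ∈ Icc (0:ℝ) 1,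
        HasDerivWithinAt (fun t => r t y) (rX x y) (Icc (0:ℝ) 1) x) →
      (∀ x ∈ Icc (0:ℝ) 1, ∀ y ∈ Icc (0:ℝ) 1,
        HasDerivWithinAt (fun t => r x t) (rY x y) (Icc (0:ℝ) 1) y) →
      (∀ F ∈ ({r, rX, rY} : Set (ℝ → ℝ → ℝ)),
        ContinuousOn (fun pt : ℝ × ℝ => F pt.1 pt.2) (Icc (0:ℝ) 1 ×ˢ Icc (0:ℝ) 1)) →
      -- ∇·(br) = 0 on Ω
      (∀ x ∈ Icc (0:ℝ) 1, ∀ y ∈ Icc (0:ℝ) 1,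
        b1x x y * r x y + b1 x y * rX x y + b2y x y * r x y + b2 x y * rY x y = 0) →
      ∫ x in (0:ℝ)..1, ∫ y in (0:ℝ)..1, (ε * phi x y - f x y) * r x y = 0 := by
  intro r rX rY hrX hrY hrc hdiv
  have hequation : ∀ x ∈ uIcc (0:ℝ) 1, ∀ y ∈ uIcc (0:ℝ) 1,
      (ε * phi x y - f x y) * r x y = (b1 x y * wX x y + b2 x y * wY x y) * r x y := by
    intro x hx y hy
    rw [uIcc_of_le zero_le_one] at hx hy
    rw [← hpde x hx y hy]
    ring
  rw [intervalIntegral.integral_congr fun x hx => intervalIntegral.integral_congr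
    fun y hy => hequation x hx y hy]
  exact integral_integral_transport_mul_eq_zero zero_le_one zero_le_one hb1x hb2y hwX hwY hrX hrY
    (fun F hF => hcont F (by simp only [mem_insert_iff, mem_singleton_iff] at hF ⊢; tauto))
    hrc hdiv hbdx hbdy

/-- The equation determining the `K`-component of the solution: if `φ` solves
`-(b·∇)(∇·(bφ)) + εφ = f` on the unit square with boundary condition `(b·ν)∇·(bφ) = 0`,
then `∫_Ω (εφ - f) r = 0` for every `C¹` function `r` with `∇·(br) = 0` on `Ω`.
Here `w = ∇·(bφ)` (expanded by the product rule) with partial derivatives `wX`, `wY`, and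
all functions are encoded with their partial-derivative data (`b1x = ∂b₁/∂x`, etc.). -/
theorem statement11 (ε : ℝ)
    (b1 b2 b1x b1y b2x b2y f phi phiX phiY w wX wY : ℝ → ℝ → ℝ)
    (hb1x : ∀ x ∈ Icc (0:ℝ) 1, ∀ y ∈ Icc (0:ℝ) 1,
      HasDerivWithinAt (fun t => b1 t y) (b1x x y) (Icc (0:ℝ) 1) x)
    (hb1y : ∀ x ∈ Icc (0:ℝ) 1, ∀ y ∈ Icc (0:ℝ) 1,
      HasDerivWithinAt (fun t => b1 x t) (b1y x y) (Icc (0:ℝ) 1) y)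
    (hb2x : ∀ x ∈ Icc (0:ℝ) 1, ∀ y ∈ Icc (0:ℝ) 1,
      HasDerivWithinAt (fun t => b2 t y) (b2x x y) (Icc (0:ℝ) 1) x)
    (hb2y : ∀ x ∈ Icc (0:ℝ) 1, ∀ y ∈ Icc (0:ℝ) 1,
      HasDerivWithinAt (fun t => b2 x t) (b2y x y) (Icc (0:ℝ) 1) y)
    (hphiX : ∀ x ∈ Icc (0:ℝ) 1, ∀ y ∈ Icc (0:ℝ) 1,
      HasDerivWithinAt (fun t => phi t y) (phiX x y) (Icc (0:ℝ) 1) x)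
    (hphiY : ∀ x ∈ Icc (0:ℝ) 1, ∀ y ∈ Icc (0:ℝ) 1,
      HasDerivWithinAt (fun t => phi x t) (phiY x y) (Icc (0:ℝ) 1) y)
    -- w = ∇·(bφ) = ∂x(b₁φ) + ∂y(b₂φ), expanded by the product rule
    (hw : ∀ x ∈ Icc (0:ℝ) 1, ∀ y ∈ Icc (0:ℝ) 1,
      w x y = b1x x y * phi x y + b1 x y * phiX x y
        + b2y x y * phi x y + b2 x y * phiY x y)
    (hwX : ∀ x ∈ Icc (0:ℝ) 1, ∀ y ∈ Icc (0:ℝ) 1,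
      HasDerivWithinAt (fun t => w t y) (wX x y) (Icc (0:ℝ) 1) x)
    (hwY : ∀ x ∈ Icc (0:ℝ) 1, ∀ y ∈ Icc (0:ℝ) 1,
      HasDerivWithinAt (fun t => w x t) (wY x y) (Icc (0:ℝ) 1) y)
    (hcont : ∀ F ∈ ({b1, b2, b1x, b1y, b2x, b2y, f, phi, phiX, phiY, w, wX, wY} :
        Set (ℝ → ℝ → ℝ)),
      ContinuousOn (fun pt : ℝ × ℝ => F pt.1 pt.2) (Icc (0:ℝ) 1 ×ˢ Icc (0:ℝ) 1))
    -- (a) the PDE : -(b·∇)(∇·(bφ)) + εφ = f on Ω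
    (hpde : ∀ x ∈ Icc (0:ℝ) 1, ∀ y ∈ Icc (0:ℝ) 1,
      -(b1 x y * wX x y + b2 x y * wY x y) + ε * phi x y = f x y)
    -- (b) the boundary condition (b·ν)∇·(bφ) = 0 on ∂Ω
    (hbdx : ∀ y ∈ Icc (0:ℝ) 1, b1 0 y * w 0 y = 0 ∧ b1 1 y * w 1 y = 0)
    (hbdy : ∀ x ∈ Icc (0:ℝ) 1, b2 x 0 * w x 0 = 0 ∧ b2 x 1 * w x 1 = 0) :
    ∀ r rX rY : ℝ → ℝ → ℝ,
      (∀ x ∈ Icc (0:ℝ) 1, ∀ y ∈ Icc (0:ℝ) 1,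
        HasDerivWithinAt (fun t => r t y) (rX x y) (Icc (0:ℝ) 1) x) →
      (∀ x ∈ Icc (0:ℝ) 1, ∀ y ∈ Icc (0:ℝ) 1,
        HasDerivWithinAt (fun t => r x t) (rY x y) (Icc (0:ℝ) 1) y) →
      (∀ F ∈ ({r, rX, rY} : Set (ℝ → ℝ → ℝ)),
        ContinuousOn (fun pt : ℝ × ℝ => F pt.1 pt.2) (Icc (0:ℝ) 1 ×ˢ Icc (0:ℝ) 1)) →
      -- ∇·(br) = 0 on Ω
      (∀ x ∈ Icc (0:ℝ) 1, ∀ y ∈ Icc (0:ℝ) 1,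
        b1x x y * r x y + b1 x y * rX x y + b2y x y * r x y + b2 x y * rY x y = 0) →
      ∫ x in (0:ℝ)..1, ∫ y in (0:ℝ)..1, (ε * phi x y - f x y) * r x y = 0 :=
  statement11_general ε b1 b2 b1x b1y b2x b2y f phi phiX phiY w wX wY hb1x hb2y hwX hwY hcont hpde
    hbdx hbdy
end

section
/- Let Ω = [0,1]×[0,1], ε > 0, let b = (b₁,b₂) : Ω → ℝ² be continuously differentiable, and let f : Ω → ℝ be continuous. Suppose φ₁, φ₂ : Ω → ℝ are twice continuously differentiable and for i = 1, 2: −(b·∇)(∇·(bφᵢ)) + ε·φᵢ = f on Ω, and (b·ν)∇·(bφᵢ) = 0 on ∂Ω (i.e. b₁·∇·(bφᵢ) = 0 on the faces x = 0, 1 and b₂·∇·(bφᵢ) = 0 on the faces y = 0, 1). Then φ₁ = φ₂ on Ω. -/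
/-!
Write `φ = φ₁ - φ₂` and `w = w₁ - w₂ = ∇·(bφ)`, so that `(b·∇)w = εφ`. The product rule gives
the energy identity `εφ² + w² = ∂ₓ(b₁wφ) + ∂_y(b₂wφ)`, whose right-hand side integrates to zero
over the square because the fluxes `b₁w`, `b₂w` vanish on the respective faces. A continuous
non-negative function with zero integral vanishes, so `εφ² + w² = 0` and hence `φ = 0`.
-/

open Set MeasureTheory Function

theorem integral_Icc_eq_sub_of_hasDerivWithinAt {f f' : ℝ → ℝ} {a b : ℝ} (hab : a ≤ b)
    (hf : ∀ x ∈ Icc a b, HasDerivWithinAt f (f' x) (Icc a b) x)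
    (hf' : ContinuousOn f' (Icc a b)) :
    ∫ x in Icc a b, f' x = f b - f a := by
  rw [integral_Icc_eq_integral_Ioc, ← intervalIntegral.integral_of_le hab]
  exact intervalIntegral.integral_eq_sub_of_hasDerivAt_of_le hab
    (fun x hx => (hf x hx).continuousWithinAt)
    (fun x hx => (hf x (Ioo_subset_Icc_self hx)).hasDerivAt (Icc_mem_nhds hx.1 hx.2))
    (hf'.intervalIntegrable_of_Icc hab)

theorem setIntegral_rectangle_divergence_eq_zero {a b c d : ℝ} (hab : a ≤ b) (hcd : c ≤ d)
    {P Px Q Qy : ℝ → ℝ → ℝ}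
    (hP : ∀ x ∈ Icc a b, ∀ y ∈ Icc c d,
      HasDerivWithinAt (fun t => P t y) (Px x y) (Icc a b) x)
    (hQ : ∀ x ∈ Icc a b, ∀ y ∈ Icc c d,
      HasDerivWithinAt (fun t => Q x t) (Qy x y) (Icc c d) y)
    (hPx : ContinuousOn (uncurry Px) (Icc a b ×ˢ Icc c d))
    (hQy : ContinuousOn (uncurry Qy) (Icc a b ×ˢ Icc c d))
    (hPa : ∀ y ∈ Icc c d, P a y = 0) (hPb : ∀ y ∈ Icc c d, P b y = 0)
    (hQc : ∀ x ∈ Icc a b, Q x c = 0) (hQd : ∀ x ∈ Icc a b, Q x d = 0) :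
    ∫ p in Icc a b ×ˢ Icc c d, (Px p.1 p.2 + Qy p.1 p.2) = 0 := by
  have hS : IsCompact (Icc a b ×ˢ Icc c d) := isCompact_Icc.prod isCompact_Icc
  have hPint : ∫ p in Icc a b ×ˢ Icc c d, Px p.1 p.2 = 0 := by
    rw [Measure.volume_eq_prod, ← setIntegral_prod_swap (Icc a b) (Icc c d)
      (fun p : ℝ × ℝ => Px p.1 p.2), setIntegral_prod]
    · refine setIntegral_eq_zero_of_forall_eq_zero fun y hy => ?_
      exact (integral_Icc_eq_sub_of_hasDerivWithinAt hab (fun x hx => hP x hx y hy)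
        (hPx.uncurry_right y hy)).trans (by rw [hPa y hy, hPb y hy, sub_zero])
    · exact (hPx.comp continuous_swap.continuousOn fun p hp => ⟨hp.2, hp.1⟩)
        |>.integrableOn_compact (isCompact_Icc.prod isCompact_Icc)
  have hQint : ∫ p in Icc a b ×ˢ Icc c d, Qy p.1 p.2 = 0 := by
    rw [Measure.volume_eq_prod, setIntegral_prod (fun p : ℝ × ℝ => Qy p.1 p.2)
      (hQy.integrableOn_compact hS)]
    refine setIntegral_eq_zero_of_forall_eq_zero fun x hx => ?_
    rw [integral_Icc_eq_sub_of_hasDerivWithinAt hcd (hQ x hx) (hQy.uncurry_left x hx),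
      hQc x hx, hQd x hx, sub_zero]
  rw [integral_add (f := fun p : ℝ × ℝ => Px p.1 p.2) (g := fun p : ℝ × ℝ => Qy p.1 p.2)
    (hPx.integrableOn_compact hS) (hQy.integrableOn_compact hS), hPint, hQint, add_zero]

theorem eqOn_zero_of_setIntegral_eq_zero {X : Type*} [TopologicalSpace X] [T2Space X]
    [MeasurableSpace X] [OpensMeasurableSpace X] {μ : Measure X} [μ.IsOpenPosMeasure]
    [IsFiniteMeasureOnCompacts μ] {s : Set X} {g : X → ℝ} (hs : IsCompact s)
    (hsi : s ⊆ closure (interior s)) (hg : ContinuousOn g s) (hnn : ∀ x ∈ s, 0 ≤ g x)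
    (hI : ∫ x in s, g x ∂μ = 0) : EqOn g 0 s := by
  have hae : g =ᵐ[μ.restrict s] 0 := (setIntegral_eq_zero_iff_of_nonneg_ae
    (ae_restrict_of_forall_mem hs.measurableSet hnn) (hg.integrableOn_compact hs)).1 hI
  exact Measure.eqOn_of_ae_eq hae hg continuousOn_const hsi

section HomogeneousProblem

variable {ε a b c d : ℝ} {b1 b2 b1x b2y φ φX φY w wX wY : ℝ → ℝ → ℝ}

theorem homogeneous_solution_eq_zero (hε : 0 < ε) (hab : a < b) (hcd : c < d)
    (hb1 : ∀ x ∈ Icc a b, ∀ y ∈ Icc c d,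
      HasDerivWithinAt (fun t => b1 t y) (b1x x y) (Icc a b) x)
    (hb2 : ∀ x ∈ Icc a b, ∀ y ∈ Icc c d,
      HasDerivWithinAt (fun t => b2 x t) (b2y x y) (Icc c d) y)
    (hφX : ∀ x ∈ Icc a b, ∀ y ∈ Icc c d,
      HasDerivWithinAt (fun t => φ t y) (φX x y) (Icc a b) x)
    (hφY : ∀ x ∈ Icc a b, ∀ y ∈ Icc c d,
      HasDerivWithinAt (fun t => φ x t) (φY x y) (Icc c d) y)
    (hwX : ∀ x ∈ Icc a b, ∀ y ∈ Icc c d,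
      HasDerivWithinAt (fun t => w t y) (wX x y) (Icc a b) x)
    (hwY : ∀ x ∈ Icc a b, ∀ y ∈ Icc c d,
      HasDerivWithinAt (fun t => w x t) (wY x y) (Icc c d) y)
    (cb1 : ContinuousOn (uncurry b1) (Icc a b ×ˢ Icc c d))
    (cb2 : ContinuousOn (uncurry b2) (Icc a b ×ˢ Icc c d))
    (cb1x : ContinuousOn (uncurry b1x) (Icc a b ×ˢ Icc c d))
    (cb2y : ContinuousOn (uncurry b2y) (Icc a b ×ˢ Icc c d))
    (cφ : ContinuousOn (uncurry φ) (Icc a b ×ˢ Icc c d))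
    (cφX : ContinuousOn (uncurry φX) (Icc a b ×ˢ Icc c d))
    (cφY : ContinuousOn (uncurry φY) (Icc a b ×ˢ Icc c d))
    (cw : ContinuousOn (uncurry w) (Icc a b ×ˢ Icc c d))
    (cwX : ContinuousOn (uncurry wX) (Icc a b ×ˢ Icc c d))
    (cwY : ContinuousOn (uncurry wY) (Icc a b ×ˢ Icc c d))
    (hw : ∀ x ∈ Icc a b, ∀ y ∈ Icc c d,
      w x y = b1x x y * φ x y + b1 x y * φX x y + b2y x y * φ x y + b2 x y * φY x y)
    (hpde : ∀ x ∈ Icc a b, ∀ y ∈ Icc c d, b1 x y * wX x y + b2 x y * wY x y = ε * φ x y)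
    (hbdx : ∀ y ∈ Icc c d, b1 a y * w a y = 0 ∧ b1 b y * w b y = 0)
    (hbdy : ∀ x ∈ Icc a b, b2 x c * w x c = 0 ∧ b2 x d * w x d = 0) :
    ∀ x ∈ Icc a b, ∀ y ∈ Icc c d, φ x y = 0 := by
  set S := Icc a b ×ˢ Icc c d
  have henergy : ∀ p ∈ S, ε * φ p.1 p.2 ^ 2 + w p.1 p.2 ^ 2 =
      ((b1x p.1 p.2 * w p.1 p.2 + b1 p.1 p.2 * wX p.1 p.2) * φ p.1 p.2
          + b1 p.1 p.2 * w p.1 p.2 * φX p.1 p.2)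
        + ((b2y p.1 p.2 * w p.1 p.2 + b2 p.1 p.2 * wY p.1 p.2) * φ p.1 p.2
          + b2 p.1 p.2 * w p.1 p.2 * φY p.1 p.2) := fun p ⟨hx, hy⟩ => by
    linear_combination (-φ p.1 p.2) * hpde p.1 hx p.2 hy + w p.1 p.2 * hw p.1 hx p.2 hy
  have hint : ∫ p in S, (ε * φ p.1 p.2 ^ 2 + w p.1 p.2 ^ 2) = 0 := by
    rw [setIntegral_congr_fun (measurableSet_Icc.prod measurableSet_Icc) henergy]
    exact setIntegral_rectangle_divergence_eq_zero (P := fun x y => b1 x y * w x y * φ x y)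
      (Q := fun x y => b2 x y * w x y * φ x y) hab.le hcd.le
      (fun x hx y hy => ((hb1 x hx y hy).mul (hwX x hx y hy)).mul (hφX x hx y hy))
      (fun x hx y hy => ((hb2 x hx y hy).mul (hwY x hx y hy)).mul (hφY x hx y hy))
      (((cb1x.mul cw).add (cb1.mul cwX)).mul cφ |>.add ((cb1.mul cw).mul cφX))
      (((cb2y.mul cw).add (cb2.mul cwY)).mul cφ |>.add ((cb2.mul cw).mul cφY))
      (fun y hy => by rw [(hbdx y hy).1, zero_mul]) (fun y hy => by rw [(hbdx y hy).2, zero_mul])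
      (fun x hx => by rw [(hbdy x hx).1, zero_mul]) (fun x hx => by rw [(hbdy x hx).2, zero_mul])
  have hS : S ⊆ closure (interior S) := by
    rw [interior_prod_eq, interior_Icc, interior_Icc, closure_prod_eq, closure_Ioo hab.ne,
      closure_Ioo hcd.ne]
  have hzero := eqOn_zero_of_setIntegral_eq_zero
    (g := fun p : ℝ × ℝ => ε * φ p.1 p.2 ^ 2 + w p.1 p.2 ^ 2) (isCompact_Icc.prod isCompact_Icc)
    hS ((continuousOn_const.mul (cφ.pow 2)).add (cw.pow 2)) (fun p _ => by positivity) hint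
  intro x hx y hy
  have hxy : ε * φ x y ^ 2 + w x y ^ 2 = 0 := hzero (x := (x, y)) ⟨hx, hy⟩
  have hφ2 : φ x y ^ 2 = 0 := by nlinarith [sq_nonneg (φ x y), sq_nonneg (w x y)]
  exact pow_eq_zero_iff two_ne_zero |>.1 hφ2

end HomogeneousProblem

theorem statement12_general (ε : ℝ) (hε : 0 < ε)
    (b1 b2 b1x b1y b2x b2y f : ℝ → ℝ → ℝ)
    (phi1 phi1X phi1Y w1 w1X w1Y phi2 phi2X phi2Y w2 w2X w2Y : ℝ → ℝ → ℝ)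
    (hb1x : ∀ x ∈ Icc (0:ℝ) 1, ∀ y ∈ Icc (0:ℝ) 1,
      HasDerivWithinAt (fun t => b1 t y) (b1x x y) (Icc (0:ℝ) 1) x)
    (hb2y : ∀ x ∈ Icc (0:ℝ) 1, ∀ y ∈ Icc (0:ℝ) 1,
      HasDerivWithinAt (fun t => b2 x t) (b2y x y) (Icc (0:ℝ) 1) y)
    (hphi1X : ∀ x ∈ Icc (0:ℝ) 1, ∀ y ∈ Icc (0:ℝ) 1,
      HasDerivWithinAt (fun t => phi1 t y) (phi1X x y) (Icc (0:ℝ) 1) x)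
    (hphi1Y : ∀ x ∈ Icc (0:ℝ) 1, ∀ y ∈ Icc (0:ℝ) 1,
      HasDerivWithinAt (fun t => phi1 x t) (phi1Y x y) (Icc (0:ℝ) 1) y)
    (hw1 : ∀ x ∈ Icc (0:ℝ) 1, ∀ y ∈ Icc (0:ℝ) 1,
      w1 x y = b1x x y * phi1 x y + b1 x y * phi1X x y
        + b2y x y * phi1 x y + b2 x y * phi1Y x y)
    (hw1X : ∀ x ∈ Icc (0:ℝ) 1, ∀ y ∈ Icc (0:ℝ) 1,
      HasDerivWithinAt (fun t => w1 t y) (w1X x y) (Icc (0:ℝ) 1) x)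
    (hw1Y : ∀ x ∈ Icc (0:ℝ) 1, ∀ y ∈ Icc (0:ℝ) 1,
      HasDerivWithinAt (fun t => w1 x t) (w1Y x y) (Icc (0:ℝ) 1) y)
    (hphi2X : ∀ x ∈ Icc (0:ℝ) 1, ∀ y ∈ Icc (0:ℝ) 1,
      HasDerivWithinAt (fun t => phi2 t y) (phi2X x y) (Icc (0:ℝ) 1) x)
    (hphi2Y : ∀ x ∈ Icc (0:ℝ) 1, ∀ y ∈ Icc (0:ℝ) 1,
      HasDerivWithinAt (fun t => phi2 x t) (phi2Y x y) (Icc (0:ℝ) 1) y)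
    (hw2 : ∀ x ∈ Icc (0:ℝ) 1, ∀ y ∈ Icc (0:ℝ) 1,
      w2 x y = b1x x y * phi2 x y + b1 x y * phi2X x y
        + b2y x y * phi2 x y + b2 x y * phi2Y x y)
    (hw2X : ∀ x ∈ Icc (0:ℝ) 1, ∀ y ∈ Icc (0:ℝ) 1,
      HasDerivWithinAt (fun t => w2 t y) (w2X x y) (Icc (0:ℝ) 1) x)
    (hw2Y : ∀ x ∈ Icc (0:ℝ) 1, ∀ y ∈ Icc (0:ℝ) 1,
      HasDerivWithinAt (fun t => w2 x t) (w2Y x y) (Icc (0:ℝ) 1) y)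
    (hcont : ∀ F ∈ ({b1, b2, b1x, b1y, b2x, b2y, f, phi1, phi1X, phi1Y, w1, w1X, w1Y,
        phi2, phi2X, phi2Y, w2, w2X, w2Y} : Set (ℝ → ℝ → ℝ)),
      ContinuousOn (fun pt : ℝ × ℝ => F pt.1 pt.2) (Icc (0:ℝ) 1 ×ˢ Icc (0:ℝ) 1))
    (hpde1 : ∀ x ∈ Icc (0:ℝ) 1, ∀ y ∈ Icc (0:ℝ) 1,
      -(b1 x y * w1X x y + b2 x y * w1Y x y) + ε * phi1 x y = f x y)
    (hpde2 : ∀ x ∈ Icc (0:ℝ) 1, ∀ y ∈ Icc (0:ℝ) 1,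
      -(b1 x y * w2X x y + b2 x y * w2Y x y) + ε * phi2 x y = f x y)
    (hbd1x : ∀ y ∈ Icc (0:ℝ) 1, b1 0 y * w1 0 y = 0 ∧ b1 1 y * w1 1 y = 0)
    (hbd1y : ∀ x ∈ Icc (0:ℝ) 1, b2 x 0 * w1 x 0 = 0 ∧ b2 x 1 * w1 x 1 = 0)
    (hbd2x : ∀ y ∈ Icc (0:ℝ) 1, b1 0 y * w2 0 y = 0 ∧ b1 1 y * w2 1 y = 0)
    (hbd2y : ∀ x ∈ Icc (0:ℝ) 1, b2 x 0 * w2 x 0 = 0 ∧ b2 x 1 * w2 x 1 = 0) :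
    ∀ x ∈ Icc (0:ℝ) 1, ∀ y ∈ Icc (0:ℝ) 1, phi1 x y = phi2 x y := by
  intro x hx y hy
  refine sub_eq_zero.1 (homogeneous_solution_eq_zero (φ := fun x y => phi1 x y - phi2 x y)
    (w := fun x y => w1 x y - w2 x y) hε zero_lt_one zero_lt_one hb1x hb2y
    (fun x hx y hy => (hphi1X x hx y hy).sub (hphi2X x hx y hy))
    (fun x hx y hy => (hphi1Y x hx y hy).sub (hphi2Y x hx y hy))
    (fun x hx y hy => (hw1X x hx y hy).sub (hw2X x hx y hy))
    (fun x hx y hy => (hw1Y x hx y hy).sub (hw2Y x hx y hy))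
    (hcont b1 (by simp)) (hcont b2 (by simp)) (hcont b1x (by simp)) (hcont b2y (by simp))
    ((hcont phi1 (by simp)).sub (hcont phi2 (by simp)))
    ((hcont phi1X (by simp)).sub (hcont phi2X (by simp)))
    ((hcont phi1Y (by simp)).sub (hcont phi2Y (by simp)))
    ((hcont w1 (by simp)).sub (hcont w2 (by simp)))
    ((hcont w1X (by simp)).sub (hcont w2X (by simp)))
    ((hcont w1Y (by simp)).sub (hcont w2Y (by simp)))
    (fun x hx y hy => by rw [hw1 x hx y hy, hw2 x hx y hy]; ring)
    (fun x hx y hy => by linarith [hpde1 x hx y hy, hpde2 x hx y hy])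
    (fun y hy => ⟨by simp only [mul_sub, (hbd1x y hy).1, (hbd2x y hy).1, sub_self],
      by simp only [mul_sub, (hbd1x y hy).2, (hbd2x y hy).2, sub_self]⟩)
    (fun x hx => ⟨by simp only [mul_sub, (hbd1y x hx).1, (hbd2y x hx).1, sub_self],
      by simp only [mul_sub, (hbd1y x hx).2, (hbd2y x hx).2, sub_self]⟩) x hx y hy)

/-- Uniqueness, for each fixed `ε > 0`, of the (`C²`) solution of the degenerate anisotropic
elliptic problem `-(b·∇)(∇·(bφ)) + εφ = f` on the unit square with boundary condition
`(b·ν)∇·(bφ) = 0`.  For each solution `φᵢ`, `wᵢ = ∇·(bφᵢ)` (expanded by the product rule)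
with partial derivatives `wᵢX`, `wᵢY`; all functions are encoded with their
partial-derivative data (`b1x = ∂b₁/∂x`, etc.). -/
theorem statement12 (ε : ℝ) (hε : 0 < ε)
    (b1 b2 b1x b1y b2x b2y f : ℝ → ℝ → ℝ)
    (phi1 phi1X phi1Y w1 w1X w1Y phi2 phi2X phi2Y w2 w2X w2Y : ℝ → ℝ → ℝ)
    (hb1x : ∀ x ∈ Icc (0:ℝ) 1, ∀ y ∈ Icc (0:ℝ) 1,
      HasDerivWithinAt (fun t => b1 t y) (b1x x y) (Icc (0:ℝ) 1) x)
    (hb1y : ∀ x ∈ Icc (0:ℝ) 1, ∀ y ∈ Icc (0:ℝ) 1,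
      HasDerivWithinAt (fun t => b1 x t) (b1y x y) (Icc (0:ℝ) 1) y)
    (hb2x : ∀ x ∈ Icc (0:ℝ) 1, ∀ y ∈ Icc (0:ℝ) 1,
      HasDerivWithinAt (fun t => b2 t y) (b2x x y) (Icc (0:ℝ) 1) x)
    (hb2y : ∀ x ∈ Icc (0:ℝ) 1, ∀ y ∈ Icc (0:ℝ) 1,
      HasDerivWithinAt (fun t => b2 x t) (b2y x y) (Icc (0:ℝ) 1) y)
    (hphi1X : ∀ x ∈ Icc (0:ℝ) 1, ∀ y ∈ Icc (0:ℝ) 1,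
      HasDerivWithinAt (fun t => phi1 t y) (phi1X x y) (Icc (0:ℝ) 1) x)
    (hphi1Y : ∀ x ∈ Icc (0:ℝ) 1, ∀ y ∈ Icc (0:ℝ) 1,
      HasDerivWithinAt (fun t => phi1 x t) (phi1Y x y) (Icc (0:ℝ) 1) y)
    (hw1 : ∀ x ∈ Icc (0:ℝ) 1, ∀ y ∈ Icc (0:ℝ) 1,
      w1 x y = b1x x y * phi1 x y + b1 x y * phi1X x y
        + b2y x y * phi1 x y + b2 x y * phi1Y x y)
    (hw1X : ∀ x ∈ Icc (0:ℝ) 1, ∀ y ∈ Icc (0:ℝ) 1,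
      HasDerivWithinAt (fun t => w1 t y) (w1X x y) (Icc (0:ℝ) 1) x)
    (hw1Y : ∀ x ∈ Icc (0:ℝ) 1, ∀ y ∈ Icc (0:ℝ) 1,
      HasDerivWithinAt (fun t => w1 x t) (w1Y x y) (Icc (0:ℝ) 1) y)
    (hphi2X : ∀ x ∈ Icc (0:ℝ) 1, ∀ y ∈ Icc (0:ℝ) 1,
      HasDerivWithinAt (fun t => phi2 t y) (phi2X x y) (Icc (0:ℝ) 1) x)
    (hphi2Y : ∀ x ∈ Icc (0:ℝ) 1, ∀ y ∈ Icc (0:ℝ) 1,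
      HasDerivWithinAt (fun t => phi2 x t) (phi2Y x y) (Icc (0:ℝ) 1) y)
    (hw2 : ∀ x ∈ Icc (0:ℝ) 1, ∀ y ∈ Icc (0:ℝ) 1,
      w2 x y = b1x x y * phi2 x y + b1 x y * phi2X x y
        + b2y x y * phi2 x y + b2 x y * phi2Y x y)
    (hw2X : ∀ x ∈ Icc (0:ℝ) 1, ∀ y ∈ Icc (0:ℝ) 1,
      HasDerivWithinAt (fun t => w2 t y) (w2X x y) (Icc (0:ℝ) 1) x)
    (hw2Y : ∀ x ∈ Icc (0:ℝ) 1, ∀ y ∈ Icc (0:ℝ) 1,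
      HasDerivWithinAt (fun t => w2 x t) (w2Y x y) (Icc (0:ℝ) 1) y)
    (hcont : ∀ F ∈ ({b1, b2, b1x, b1y, b2x, b2y, f, phi1, phi1X, phi1Y, w1, w1X, w1Y,
        phi2, phi2X, phi2Y, w2, w2X, w2Y} : Set (ℝ → ℝ → ℝ)),
      ContinuousOn (fun pt : ℝ × ℝ => F pt.1 pt.2) (Icc (0:ℝ) 1 ×ˢ Icc (0:ℝ) 1))
    (hpde1 : ∀ x ∈ Icc (0:ℝ) 1, ∀ y ∈ Icc (0:ℝ) 1,
      -(b1 x y * w1X x y + b2 x y * w1Y x y) + ε * phi1 x y = f x y)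
    (hpde2 : ∀ x ∈ Icc (0:ℝ) 1, ∀ y ∈ Icc (0:ℝ) 1,
      -(b1 x y * w2X x y + b2 x y * w2Y x y) + ε * phi2 x y = f x y)
    (hbd1x : ∀ y ∈ Icc (0:ℝ) 1, b1 0 y * w1 0 y = 0 ∧ b1 1 y * w1 1 y = 0)
    (hbd1y : ∀ x ∈ Icc (0:ℝ) 1, b2 x 0 * w1 x 0 = 0 ∧ b2 x 1 * w1 x 1 = 0)
    (hbd2x : ∀ y ∈ Icc (0:ℝ) 1, b1 0 y * w2 0 y = 0 ∧ b1 1 y * w2 1 y = 0)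
    (hbd2y : ∀ x ∈ Icc (0:ℝ) 1, b2 x 0 * w2 x 0 = 0 ∧ b2 x 1 * w2 x 1 = 0) :
    ∀ x ∈ Icc (0:ℝ) 1, ∀ y ∈ Icc (0:ℝ) 1, phi1 x y = phi2 x y :=
  statement12_general ε hε b1 b2 b1x b1y b2x b2y f phi1 phi1X phi1Y w1 w1X w1Y phi2 phi2X phi2Y w2
    w2X w2Y hb1x hb2y hphi1X hphi1Y hw1 hw1X hw1Y hphi2X hphi2Y hw2 hw2X hw2Y hcont hpde1 hpde2
    hbd1x hbd1y hbd2x hbd2y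
end

section
/- Let Ω ⊆ ℝ² be open, ε ∈ ℝ, and let b = (b₁,b₂) : Ω → ℝ², p, f : Ω → ℝ be continuously differentiable and g : Ω → ℝ be twice continuously differentiable. Assume ∇·(bp) = 0 on Ω and ε·p − f = b·∇g on Ω. Then: (i) if ε ≠ 0, p = (1/ε)(f + b·∇g) on Ω; and (ii) g satisfies the second-order equation −∇·( (b·∇g) b ) = ∇·( f b ) at every point of Ω. -/
open Set

/-- Strong form of the paper's Proposition 2.2: on an open set `Ω ⊆ ℝ²`, if `∇·(bp) = 0`
and `εp - f = b·∇g`, then (i) for `ε ≠ 0`, `p = (1/ε)(f + b·∇g)`, and (ii) with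
`v := b·∇g = b₁ gX + b₂ gY`, the second-order equation `-∇·(v b) = ∇·(f b)` holds on `Ω`.
All functions are encoded with their partial-derivative data (`b1x = ∂b₁/∂x`,
`gXY = ∂²g/∂x∂y`, etc.), the derivatives in (ii) being expanded by the product rule. -/
theorem statement13
    (Ω : Set (ℝ × ℝ)) (hΩ : IsOpen Ω) (ε : ℝ)
    (b1 b2 b1x b1y b2x b2y p pX pY f fX fY g gX gY gXX gXY gYX gYY : ℝ → ℝ → ℝ)
    (hb1x : ∀ x y, (x, y) ∈ Ω → HasDerivAt (fun t => b1 t y) (b1x x y) x)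
    (hb1y : ∀ x y, (x, y) ∈ Ω → HasDerivAt (fun t => b1 x t) (b1y x y) y)
    (hb2x : ∀ x y, (x, y) ∈ Ω → HasDerivAt (fun t => b2 t y) (b2x x y) x)
    (hb2y : ∀ x y, (x, y) ∈ Ω → HasDerivAt (fun t => b2 x t) (b2y x y) y)
    (hpX : ∀ x y, (x, y) ∈ Ω → HasDerivAt (fun t => p t y) (pX x y) x)
    (hpY : ∀ x y, (x, y) ∈ Ω → HasDerivAt (fun t => p x t) (pY x y) y)
    (hfX : ∀ x y, (x, y) ∈ Ω → HasDerivAt (fun t => f t y) (fX x y) x)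
    (hfY : ∀ x y, (x, y) ∈ Ω → HasDerivAt (fun t => f x t) (fY x y) y)
    (hgX : ∀ x y, (x, y) ∈ Ω → HasDerivAt (fun t => g t y) (gX x y) x)
    (hgY : ∀ x y, (x, y) ∈ Ω → HasDerivAt (fun t => g x t) (gY x y) y)
    (hgXX : ∀ x y, (x, y) ∈ Ω → HasDerivAt (fun t => gX t y) (gXX x y) x)
    (hgXY : ∀ x y, (x, y) ∈ Ω → HasDerivAt (fun t => gX x t) (gXY x y) y)
    (hgYX : ∀ x y, (x, y) ∈ Ω → HasDerivAt (fun t => gY t y) (gYX x y) x)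
    (hgYY : ∀ x y, (x, y) ∈ Ω → HasDerivAt (fun t => gY x t) (gYY x y) y)
    -- ∇·(bp) = 0 on Ω
    (hdivp : ∀ x y, (x, y) ∈ Ω →
      b1x x y * p x y + b1 x y * pX x y + b2y x y * p x y + b2 x y * pY x y = 0)
    -- εp - f = b·∇g on Ω
    (heq : ∀ x y, (x, y) ∈ Ω →
      ε * p x y - f x y = b1 x y * gX x y + b2 x y * gY x y) :
    -- (i)
    ((ε ≠ 0 → ∀ x y, (x, y) ∈ Ω →
      p x y = (1 / ε) * (f x y + b1 x y * gX x y + b2 x y * gY x y)) ∧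
    -- (ii) -∇·((b·∇g) b) = ∇·(f b) on Ω
    (∀ x y, (x, y) ∈ Ω →
      -((b1x x y * gX x y + b1 x y * gXX x y + b2x x y * gY x y + b2 x y * gYX x y)
          * b1 x y
        + (b1 x y * gX x y + b2 x y * gY x y) * b1x x y
        + (b1y x y * gX x y + b1 x y * gXY x y + b2y x y * gY x y + b2 x y * gYY x y)
          * b2 x y
        + (b1 x y * gX x y + b2 x y * gY x y) * b2y x y)
      = fX x y * b1 x y + f x y * b1x x y + fY x y * b2 x y + f x y * b2y x y)) := by
  refine ⟨fun hε x y hxy => ?_, fun x y hxy => ?_⟩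
  · have h := heq x y hxy
    field_simp
    linarith
  · have hmemX : ∀ᶠ t in nhds x, (t, y) ∈ Ω :=
      (hΩ.preimage (by continuity : Continuous fun t : ℝ => (t, y))).mem_nhds hxy
    have hmemY : ∀ᶠ t in nhds y, (x, t) ∈ Ω :=
      (hΩ.preimage (by continuity : Continuous fun t : ℝ => (x, t))).mem_nhds hxy
    have hvx : HasDerivAt (fun t => b1 t y * gX t y + b2 t y * gY t y)
        (b1x x y * gX x y + b1 x y * gXX x y + (b2x x y * gY x y + b2 x y * gYX x y)) x :=
      ((hb1x x y hxy).mul (hgXX x y hxy)).add ((hb2x x y hxy).mul (hgYX x y hxy))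
    have hvx2 : HasDerivAt (fun t => b1 t y * gX t y + b2 t y * gY t y)
        (ε * pX x y - fX x y) x := by
      have h' : HasDerivAt (fun t => ε * p t y - f t y) (ε * pX x y - fX x y) x :=
        ((hpX x y hxy).const_mul ε).sub (hfX x y hxy)
      exact h'.congr_of_eventuallyEq (hmemX.mono fun t ht => (heq t y ht).symm)
    have hvy : HasDerivAt (fun t => b1 x t * gX x t + b2 x t * gY x t)
        (b1y x y * gX x y + b1 x y * gXY x y + (b2y x y * gY x y + b2 x y * gYY x y)) y :=
      ((hb1y x y hxy).mul (hgXY x y hxy)).add ((hb2y x y hxy).mul (hgYY x y hxy))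
    have hvy2 : HasDerivAt (fun t => b1 x t * gX x t + b2 x t * gY x t)
        (ε * pY x y - fY x y) y := by
      have h' : HasDerivAt (fun t => ε * p x t - f x t) (ε * pY x y - fY x y) y :=
        ((hpY x y hxy).const_mul ε).sub (hfY x y hxy)
      exact h'.congr_of_eventuallyEq (hmemY.mono fun t ht => (heq x t ht).symm)
    have ex : b1x x y * gX x y + b1 x y * gXX x y + (b2x x y * gY x y + b2 x y * gYX x y)
        = ε * pX x y - fX x y := hvx.unique hvx2
    have ey : b1y x y * gX x y + b1 x y * gXY x y + (b2y x y * gY x y + b2 x y * gYY x y)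
        = ε * pY x y - fY x y := hvy.unique hvy2
    have hv := heq x y hxy
    have hd := hdivp x y hxy
    linear_combination (-(b1 x y)) * ex + (-(b2 x y)) * ey + (b1x x y + b2y x y) * hv + (-ε) * hd
end

section
/- Let Δx, Δy > 0 and let βx, βy : ℤ×ℤ → ℝ be arbitrary (they represent the components of the anisotropy field b at the primal grid nodes, the node of index (i,j) corresponding to the point (x_{i−1/2}, y_{j−1/2})). For Ψ : ℤ×ℤ → ℝ define the discrete directional gradient G(Ψ)(i,j) = βx(i,j)·[ (Ψ(i,j) − Ψ(i−1,j))/(2Δx) + (Ψ(i,j−1) − Ψ(i−1,j−1))/(2Δx) ] + βy(i,j)·[ (Ψ(i,j) − Ψ(i,j−1))/(2Δy) + (Ψ(i−1,j) − Ψ(i−1,j−1))/(2Δy) ]. For Φ : ℤ×ℤ → ℝ define the discrete divergence D(Φ)(i,j) = (βx(i+1,j)/(2Δx) − βy(i+1,j)/(2Δy))·Φ(i+1,j) + (βx(i+1,j+1)/(2Δx) + βy(i+1,j+1)/(2Δy))·Φ(i+1,j+1) − (βx(i,j)/(2Δx) + βy(i,j)/(2Δy))·Φ(i,j) − (βx(i,j+1)/(2Δx)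 − βy(i,j+1)/(2Δy))·Φ(i,j+1). Then for all finitely supported Ψ, Φ : ℤ×ℤ → ℝ, the discrete Green formula holds: Σ_{(i,j)∈ℤ²} D(Φ)(i,j)·Ψ(i,j) = − Σ_{(i,j)∈ℤ²} Φ(i,j)·G(Ψ)(i,j). -/
/-!
Both operators are four-point stencils, and `D` is exactly the transpose of `-G`: each term
`w (x + v) * Φ (x + v) * Ψ x` of `∑ D(Φ)·Ψ` becomes, after the translation `x ↦ x - v` of the
summation variable, the term `w x * Φ x * Ψ (x - v)` of `-∑ Φ·G(Ψ)`. The four stencil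
weights are `βx/(2Δx) ± βy/(2Δy)` (up to sign) at the offsets `(1,0)`, `(1,1)`, `(0,0)`, `(0,1)`.
-/

open Function

theorem finsum_comp_add_right {M R : Type*} [AddGroup M] [AddCommMonoid R] (f : M → R) (a : M) :
    ∑ᶠ x, f (x + a) = ∑ᶠ x, f x :=
  finsum_comp_equiv (Equiv.addRight a)

theorem finsum_sum_comp_add_mul_eq_finsum_mul_sum_comp_sub {ι M R : Type*} [AddGroup M]
    [CommSemiring R] (s : Finset ι) (w : ι → M → R) (v : ι → M) {φ : M → R} (ψ : M → R)
    (hφ : φ.support.Finite) :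
    ∑ᶠ x, (∑ k ∈ s, w k (x + v k) * φ (x + v k)) * ψ x =
      ∑ᶠ x, φ x * ∑ k ∈ s, w k x * ψ (x - v k) := by
  set term : ι → M → R := fun k x => φ x * (w k x * ψ (x - v k))
  have hterm : ∀ k, HasFiniteSupport (term k) :=
    fun k => hφ.subset (support_mul_subset_left _ _)
  have hshifted : ∀ k, HasFiniteSupport fun x => term k (x + v k) :=
    fun k => (hterm k).comp_of_injective (add_left_injective (v k))
  calc ∑ᶠ x, (∑ k ∈ s, w k (x + v k) * φ (x + v k)) * ψ x
      = ∑ᶠ x, ∑ k ∈ s, term k (x + v k) := by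
        refine finsum_congr fun x => ?_
        simp only [term, Finset.sum_mul, add_sub_cancel_right]
        exact Finset.sum_congr rfl fun k _ => by ring
    _ = ∑ k ∈ s, ∑ᶠ x, term k x := by
        rw [finsum_sum_comm s _ fun k _ => hshifted k]
        simp only [finsum_comp_add_right (term _)]
    _ = ∑ᶠ x, φ x * ∑ k ∈ s, w k x * ψ (x - v k) := by
        rw [← finsum_sum_comm s _ fun k _ => hterm k]
        simp only [Finset.mul_sum]

theorem statement16_general
    (Δx Δy : ℝ)
    (βx βy : ℤ × ℤ → ℝ)
    (G D : (ℤ × ℤ → ℝ) → (ℤ × ℤ → ℝ))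
    (hG : ∀ (Ψ : ℤ × ℤ → ℝ) (i j : ℤ),
      G Ψ (i, j) = βx (i, j) *
          ((Ψ (i, j) - Ψ (i - 1, j)) / (2 * Δx) + (Ψ (i, j - 1) - Ψ (i - 1, j - 1)) / (2 * Δx))
        + βy (i, j) *
          ((Ψ (i, j) - Ψ (i, j - 1)) / (2 * Δy) + (Ψ (i - 1, j) - Ψ (i - 1, j - 1)) / (2 * Δy)))
    (hD : ∀ (Φ : ℤ × ℤ → ℝ) (i j : ℤ),
      D Φ (i, j) = (βx (i + 1, j) / (2 * Δx) - βy (i + 1, j) / (2 * Δy)) * Φ (i + 1, j)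
        + (βx (i + 1, j + 1) / (2 * Δx) + βy (i + 1, j + 1) / (2 * Δy)) * Φ (i + 1, j + 1)
        - (βx (i, j) / (2 * Δx) + βy (i, j) / (2 * Δy)) * Φ (i, j)
        - (βx (i, j + 1) / (2 * Δx) - βy (i, j + 1) / (2 * Δy)) * Φ (i, j + 1)) :
    ∀ Ψ Φ : ℤ × ℤ → ℝ,
      (Function.support Ψ).Finite → (Function.support Φ).Finite →
      ∑ᶠ ij : ℤ × ℤ, D Φ ij * Ψ ij = -∑ᶠ ij : ℤ × ℤ, Φ ij * G Ψ ij := by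
  intro Ψ Φ _ hΦ
  let p : ℤ × ℤ → ℝ := fun x => βx x / (2 * Δx) + βy x / (2 * Δy)
  let q : ℤ × ℤ → ℝ := fun x => βx x / (2 * Δx) - βy x / (2 * Δy)
  let w : Fin 4 → ℤ × ℤ → ℝ := ![q, p, -p, -q]
  let v : Fin 4 → ℤ × ℤ := ![(1, 0), (1, 1), 0, (0, 1)]
  have hDΦ : ∀ x, D Φ x = ∑ k, w k (x + v k) * Φ (x + v k) := by
    rintro ⟨i, j⟩
    simp only [hD, Fin.sum_univ_four, w, v, p, q, Matrix.cons_val, Pi.neg_apply, Prod.mk_add_mk,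
      add_zero]
    ring
  have hGΨ : ∀ x, Φ x * G Ψ x = -(Φ x * ∑ k, w k x * Ψ (x - v k)) := by
    rintro ⟨i, j⟩
    simp only [hG, Fin.sum_univ_four, w, v, p, q, Matrix.cons_val, Pi.neg_apply, Prod.mk_sub_mk,
      sub_zero]
    ring
  simp only [hDΦ, hGΨ, finsum_neg_distrib, neg_neg]
  exact finsum_sum_comp_add_mul_eq_finsum_mul_sum_comp_sub _ w v Ψ hΦ

/-- Discrete Green formula (the paper's Proposition 3.2): the finite-volume approximations
`G = (b·∇)_app` (mapping dual-grid functions to primal-grid functions) and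
`D = ∇·(b ·)_app` (mapping primal-grid functions to dual-grid functions) are adjoint to
each other: `Σ D(Φ)·Ψ = - Σ Φ·G(Ψ)` for all finitely supported grid functions `Ψ, Φ`. -/
theorem statement16
    (Δx Δy : ℝ) (hΔx : 0 < Δx) (hΔy : 0 < Δy)
    (βx βy : ℤ × ℤ → ℝ)
    (G D : (ℤ × ℤ → ℝ) → (ℤ × ℤ → ℝ))
    (hG : ∀ (Ψ : ℤ × ℤ → ℝ) (i j : ℤ),
      G Ψ (i, j) = βx (i, j) *
          ((Ψ (i, j) - Ψ (i - 1, j)) / (2 * Δx) + (Ψ (i, j - 1) - Ψ (i - 1, j - 1)) / (2 * Δx))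
        + βy (i, j) *
          ((Ψ (i, j) - Ψ (i, j - 1)) / (2 * Δy) + (Ψ (i - 1, j) - Ψ (i - 1, j - 1)) / (2 * Δy)))
    (hD : ∀ (Φ : ℤ × ℤ → ℝ) (i j : ℤ),
      D Φ (i, j) = (βx (i + 1, j) / (2 * Δx) - βy (i + 1, j) / (2 * Δy)) * Φ (i + 1, j)
        + (βx (i + 1, j + 1) / (2 * Δx) + βy (i + 1, j + 1) / (2 * Δy)) * Φ (i + 1, j + 1)
        - (βx (i, j) / (2 * Δx) + βy (i, j) / (2 * Δy)) * Φ (i, j)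
        - (βx (i, j + 1) / (2 * Δx) - βy (i, j + 1) / (2 * Δy)) * Φ (i, j + 1)) :
    ∀ Ψ Φ : ℤ × ℤ → ℝ,
      (Function.support Ψ).Finite → (Function.support Φ).Finite →
      ∑ᶠ ij : ℤ × ℤ, D Φ ij * Ψ ij = -∑ᶠ ij : ℤ × ℤ, Φ ij * G Ψ ij :=
  statement16_general Δx Δy βx βy G D hG hD
end
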